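/- arXiv:1204.6431 — 7 statements merged into one kernel-verified Lean document; each statement's English description precedes it below -/
import Mathlib

section
/- Let Λ be a 2-graph with a single vertex that is finite with at least two edges of each colour. Then Λ is periodic if and only if there exist positive integers a and b and a bijection γ : Λ^{(a,0)} → Λ^{(0,b)} such that for every μ ∈ Λ^{(a,0)} and every ν ∈ Λ^{(0,b)} one has μν = γ(μ)γ^{-1}(ν) in Λ. -/
/-!
If `m ≠ n` are periods, shifting by their common part `m ⊓ n` gives periods with disjoint
supports. Neither can be `0`: a period pair `(w, 0)` would force `e = e'` for the path `e y e'`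
built from two edges of a colour occurring in `w`. So up to order they are `(a, 0)` and `(0, b)`.
Periodicity applied to `μ ν ρ` and to `σ μ ν` (blue blocks `μ, σ` of degree `(a, 0)`, red blocks
`ν, ρ` of degree `(0, b)`) shows that when `μ ν` is refactored as red-then-blue, the red part
depends only on `μ` and the blue part only on `ν`; these two maps are mutually inverse and give `γ`.

Conversely, the relation lets the first blue block `A` of a path of degree `(i a, j b)` travel to
the front as `γ A` and its last red block `N` to the back as `γ⁻¹ N`, leaving the middle segment
untouched: that is periodicity for such paths, and every path is a prefix of one of them.
-/

open Function

structure IsTwoGraphDegree {Λ : Type*} [Monoid Λ] (d : Λ → ℕ × ℕ) : Prop where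
  map_mul : ∀ x y : Λ, d (x * y) = d x + d y
  existsUnique_factor : ∀ (lam : Λ) (p q : ℕ × ℕ), d lam = p + q →
    ∃! mn : Λ × Λ, d mn.1 = p ∧ d mn.2 = q ∧ lam = mn.1 * mn.2

def IsSegmentMap {Λ : Type*} [Monoid Λ] (d : Λ → ℕ × ℕ) (seg : Λ → ℕ × ℕ → ℕ × ℕ → Λ) : Prop :=
  ∀ (lam : Λ) (p q : ℕ × ℕ), p ≤ q → q ≤ d lam →
    d (seg lam p q) = q - p ∧ ∃ α γ : Λ, d α = p ∧ lam = α * seg lam p q * γ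

def IsPeriodicPair {Λ : Type*} [Monoid Λ] (d : Λ → ℕ × ℕ) (seg : Λ → ℕ × ℕ → ℕ × ℕ → Λ)
    (m n : ℕ × ℕ) : Prop :=
  ∀ lam : Λ, m ⊔ n ≤ d lam → seg lam m (m + d lam - (m ⊔ n)) = seg lam n (n + d lam - (m ⊔ n))

/-- `(r μ ν, l μ ν)` stands for the red-then-blue refactorisation of the blue-then-red path
`μ ν`. -/
theorem exists_equiv_of_switch {X Y : Type*} [Nonempty X] [Nonempty Y] (r : X → Y → Y)
    (l : X → Y → X) (hrl : ∀ μ ν ρ, r (l μ ν) ρ = ν) (hlr : ∀ σ μ ν, l σ (r μ ν) = μ) :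
    ∃ γ : X ≃ Y, ∀ μ ν, r μ ν = γ μ ∧ l μ ν = γ.symm ν := by
  obtain ⟨μ₀⟩ := ‹Nonempty X›
  obtain ⟨ν₀⟩ := ‹Nonempty Y›
  refine ⟨⟨fun μ => r μ ν₀, l μ₀, fun μ => hlr μ₀ μ ν₀, fun ν => hrl μ₀ ν ν₀⟩, fun μ ν => ⟨?_, ?_⟩⟩
  · calc r μ ν = r (l μ₀ (r μ ν₀)) ν := by rw [hlr]
      _ = r μ ν₀ := hrl _ _ _
  · calc l μ ν = l μ (r (l μ₀ ν) ν₀) := by rw [hrl]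
      _ = l μ₀ ν := hlr _ _ _

section

variable {Λ : Type*} [Monoid Λ] {d : Λ → ℕ × ℕ} {seg : Λ → ℕ × ℕ → ℕ × ℕ → Λ}

namespace IsTwoGraphDegree

theorem exists_eq_mul (hΛ : IsTwoGraphDegree d) {lam : Λ} {p q : ℕ × ℕ} (h : d lam = p + q) :
    ∃ x y, d x = p ∧ d y = q ∧ lam = x * y :=
  let ⟨⟨x, y⟩, hxy, _⟩ := hΛ.existsUnique_factor lam p q h
  ⟨x, y, hxy⟩

theorem eq_and_eq_of_mul_eq_mul (hΛ : IsTwoGraphDegree d) {x y x' y' : Λ} (hx : d x = d x')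
    (h : x * y = x' * y') : x = x' ∧ y = y' := by
  have hy : d y = d y' := by
    have := congrArg d h
    rw [hΛ.map_mul, hΛ.map_mul, hx] at this
    exact add_left_cancel this
  exact Prod.mk.inj <| (hΛ.existsUnique_factor (x * y) (d x) (d y) (hΛ.map_mul x y)).unique
    ⟨rfl, rfl, rfl⟩ ⟨hx.symm, hy.symm, h⟩

theorem map_one (hΛ : IsTwoGraphDegree d) : d 1 = 0 := by
  simpa using hΛ.map_mul 1 1

theorem eq_one_of_map_eq_zero (hΛ : IsTwoGraphDegree d) {x : Λ} (hx : d x = 0) : x = 1 :=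
  (hΛ.eq_and_eq_of_mul_eq_mul (y := 1) (y' := x) (by rw [hx, hΛ.map_one])
    (by rw [mul_one, one_mul])).1

theorem map_pow (hΛ : IsTwoGraphDegree d) (x : Λ) (k : ℕ) : d (x ^ k) = k • d x := by
  induction k with
  | zero => rw [pow_zero, hΛ.map_one, zero_smul]
  | succ k ih => rw [pow_succ, hΛ.map_mul, ih, succ_nsmul]

theorem surjective_of_edges (hΛ : IsTwoGraphDegree d) {e f : Λ} (he : d e = (1, 0))
    (hf : d f = (0, 1)) : Surjective d := by
  rintro ⟨i, j⟩
  exact ⟨e ^ i * f ^ j, by simp [hΛ.map_mul, hΛ.map_pow, he, hf]⟩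

theorem mul_apply_eq_apply_mul_of_mul_eq (hΛ : IsTwoGraphDegree d) {δ : ℕ × ℕ}
    (φ : {u : Λ // d u = δ} → Λ) (hφ : ∀ u v : {u : Λ // d u = δ}, (u : Λ) * φ v = φ u * v)
    (i : ℕ) (A A' : {u : Λ // d u = δ}) {C C' : Λ} (hC : d C = i • δ) (hC' : d C' = i • δ)
    (h : (A : Λ) * C = C' * A') : C' * φ A' = φ A * C := by
  induction i generalizing A' C C' with
  | zero =>
    rw [zero_smul] at hC hC'
    rw [hΛ.eq_one_of_map_eq_zero hC, hΛ.eq_one_of_map_eq_zero hC', mul_one, one_mul] at h ⊢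
    rw [Subtype.ext h]
  | succ i ih =>
    obtain ⟨D, E, hD, hE, rfl⟩ := hΛ.exists_eq_mul (hC.trans (succ_nsmul δ i))
    obtain ⟨C₁, B, hC₁, hB, rfl⟩ := hΛ.exists_eq_mul (hC'.trans (succ_nsmul δ i))
    obtain ⟨hAD, rfl⟩ := hΛ.eq_and_eq_of_mul_eq_mul (x := A * D) (x' := C₁ * B)
      (by rw [hΛ.map_mul, hΛ.map_mul, A.2, hD, hC₁, hB, add_comm]) (by rw [mul_assoc, h])
    rw [mul_assoc, (hφ ⟨B, hB⟩ A' : B * φ A' = φ ⟨B, hB⟩ * A'), ← mul_assoc,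
      ih ⟨B, hB⟩ hD hC₁ hAD, mul_assoc]

theorem apply_mul_eq_mul_apply_of_mul_eq (hΛ : IsTwoGraphDegree d) {δ : ℕ × ℕ}
    (ψ : {u : Λ // d u = δ} → Λ) (hψ : ∀ u v : {u : Λ // d u = δ}, ψ u * v = u * ψ v)
    (i : ℕ) (N N' : {u : Λ // d u = δ}) {τ τ' : Λ} (hτ : d τ = i • δ) (hτ' : d τ' = i • δ)
    (h : (N : Λ) * τ = τ' * N') : ψ N * τ = τ' * ψ N' := by
  induction i generalizing N τ τ' with
  | zero =>
    rw [zero_smul] at hτ hτ'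
    rw [hΛ.eq_one_of_map_eq_zero hτ, hΛ.eq_one_of_map_eq_zero hτ', mul_one, one_mul] at h ⊢
    rw [Subtype.ext h]
  | succ i ih =>
    obtain ⟨E, τ₁, hE, hτ₁, rfl⟩ := hΛ.exists_eq_mul (hτ.trans (succ_nsmul' δ i))
    obtain ⟨M, τ₁', hM, hτ₁', rfl⟩ := hΛ.exists_eq_mul (hτ'.trans (succ_nsmul' δ i))
    obtain ⟨rfl, hEτ⟩ := hΛ.eq_and_eq_of_mul_eq_mul (N.2.trans hM.symm) (h.trans (mul_assoc _ _ _))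
    rw [← mul_assoc, (hψ N ⟨E, hE⟩ : ψ N * E = N * ψ ⟨E, hE⟩), mul_assoc,
      ih ⟨E, hE⟩ hτ₁ hτ₁' hEτ, mul_assoc]

end IsTwoGraphDegree

namespace IsSegmentMap

theorem seg_eq_of_eq_mul_mul (hseg : IsSegmentMap d seg) (hΛ : IsTwoGraphDegree d)
    {lam α β γ : Λ} {p q : ℕ × ℕ} (h : lam = α * β * γ) (hp : d α = p) (hq : d α + d β = q) :
    seg lam p q = β := by
  subst hp hq
  obtain ⟨hdeg, α', γ', hα', h'⟩ :=
    hseg lam (d α) (d α + d β) le_self_add (by rw [h, hΛ.map_mul, hΛ.map_mul]; exact le_self_add)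
  rw [add_tsub_cancel_left] at hdeg
  have h₁ := hΛ.eq_and_eq_of_mul_eq_mul (y := seg lam (d α) (d α + d β) * γ') (y' := β * γ) hα'
    (by rw [← mul_assoc, ← mul_assoc, ← h', h])
  exact (hΛ.eq_and_eq_of_mul_eq_mul hdeg h₁.2).1

theorem seg_mul_left (hseg : IsSegmentMap d seg) (hΛ : IsTwoGraphDegree d) (x : Λ) {lam : Λ}
    {p q : ℕ × ℕ} (hpq : p ≤ q) (hq : q ≤ d lam) :
    seg (x * lam) (d x + p) (d x + q) = seg lam p q := by
  obtain ⟨hdeg, α, γ, hα, h⟩ := hseg lam p q hpq hq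
  refine hseg.seg_eq_of_eq_mul_mul hΛ (α := x * α) (γ := γ) ?_ (by rw [hΛ.map_mul, hα]) ?_
  · rw [mul_assoc x, mul_assoc x, ← h]
  · rw [hΛ.map_mul, hα, hdeg, add_assoc, add_tsub_cancel_of_le hpq]

theorem seg_mul_right (hseg : IsSegmentMap d seg) (hΛ : IsTwoGraphDegree d) {lam : Λ} (y : Λ)
    {p q : ℕ × ℕ} (hpq : p ≤ q) (hq : q ≤ d lam) : seg (lam * y) p q = seg lam p q := by
  obtain ⟨hdeg, α, γ, hα, h⟩ := hseg lam p q hpq hq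
  exact hseg.seg_eq_of_eq_mul_mul hΛ (α := α) (γ := γ * y) (by rw [← mul_assoc, ← h]) hα
    (by rw [hα, hdeg, add_tsub_cancel_of_le hpq])

theorem seg_seg (hseg : IsSegmentMap d seg) (hΛ : IsTwoGraphDegree d) {lam : Λ}
    {p q r s : ℕ × ℕ} (hpq : p ≤ q) (hq : q ≤ d lam) (hrs : r ≤ s) (hs : s ≤ q - p) :
    seg (seg lam p q) r s = seg lam (p + r) (p + s) := by
  obtain ⟨hdeg, α, γ, hα, h⟩ := hseg lam p q hpq hq
  obtain ⟨hdeg', α', γ', hα', h'⟩ := hseg (seg lam p q) r s hrs (hdeg ▸ hs)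
  refine (hseg.seg_eq_of_eq_mul_mul hΛ (α := α * α') (γ := γ' * γ) ?_
    (by rw [hΛ.map_mul, hα, hα']) ?_).symm
  · conv_lhs => rw [h, h']
    simp only [mul_assoc]
  · rw [hΛ.map_mul, hα, hα', hdeg', add_assoc, add_tsub_cancel_of_le hrs]

theorem seg_sub_eq_of_mul (hseg : IsSegmentMap d seg) (hΛ : IsTwoGraphDegree d)
    {δ ε : ℕ × ℕ} {lam : Λ} (ρ : Λ) (hle : δ + ε ≤ d lam)
    (h : seg (lam * ρ) δ (d (lam * ρ) - ε) = seg (lam * ρ) ε (d (lam * ρ) - δ)) :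
    seg lam δ (d lam - ε) = seg lam ε (d lam - δ) := by
  have key : ∀ κ κ', κ + κ' = δ + ε →
      seg lam κ (d lam - κ') = seg (seg (lam * ρ) κ (d (lam * ρ) - κ')) 0 (d lam - (δ + ε)) := by
    intro κ κ' hκ
    rw [← hκ] at hle ⊢
    rw [hseg.seg_seg hΛ ?_ tsub_le_self zero_le ?_, add_zero,
      ← add_tsub_assoc_of_le hle, add_tsub_add_eq_tsub_left,
      hseg.seg_mul_right hΛ ρ ?_ tsub_le_self]
    all_goals simp only [Prod.le_def, Prod.fst_add, Prod.snd_add, Prod.fst_sub, Prod.snd_sub,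
      hΛ.map_mul] at hle ⊢; omega
  rw [key δ ε rfl, key ε δ (add_comm ε δ), h]

end IsSegmentMap

namespace IsPeriodicPair

theorem symm {m n : ℕ × ℕ} (h : IsPeriodicPair d seg m n) : IsPeriodicPair d seg n m := by
  intro lam hlam
  rw [sup_comm] at hlam ⊢
  exact (h lam hlam).symm

theorem sub_inf {m n : ℕ × ℕ} (h : IsPeriodicPair d seg m n) (hseg : IsSegmentMap d seg)
    (hΛ : IsTwoGraphDegree d) (hsurj : Surjective d) :
    IsPeriodicPair d seg (m - m ⊓ n) (n - m ⊓ n) := by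
  intro lam hlam
  obtain ⟨x, hx⟩ := hsurj (m ⊓ n)
  have hshift : ∀ k ≤ (m - m ⊓ n) ⊔ (n - m ⊓ n),
      seg lam k (k + d lam - (m - m ⊓ n) ⊔ (n - m ⊓ n)) =
        seg (x * lam) (d x + k) (d x + (k + d lam - (m - m ⊓ n) ⊔ (n - m ⊓ n))) :=
    fun k hk => (hseg.seg_mul_left hΛ x (le_self_add.trans (add_tsub_assoc_of_le hlam k).ge)
      (tsub_le_iff_left.mpr (by gcongr))).symm
  rw [hshift _ le_sup_left, hshift _ le_sup_right]
  convert h (x * lam) ?_ using 2 <;> simp [Prod.ext_iff, Prod.le_def, hΛ.map_mul, hx] at * <;> omega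

end IsPeriodicPair

theorem not_isPeriodicPair_zero (hseg : IsSegmentMap d seg) (hΛ : IsTwoGraphDegree d)
    (hsurj : Surjective d) {w ε : ℕ × ℕ} (hεw : ε ≤ w) {e e' : Λ} (he : d e = ε) (he' : d e' = ε)
    (hne : e ≠ e') : ¬ IsPeriodicPair d seg w 0 := by
  intro h
  obtain ⟨y, hy⟩ := hsurj (w - ε)
  have hey : d (e * y) = w := by rw [hΛ.map_mul, he, hy, add_tsub_cancel_of_le hεw]
  have hdeg : d (e * y * e') = w + ε := by rw [hΛ.map_mul, hey, he']
  have := h (e * y * e') (by rw [hdeg, sup_eq_left.mpr zero_le]; exact le_self_add)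
  rw [sup_eq_left.mpr zero_le, hdeg, add_tsub_cancel_left, zero_add, add_tsub_cancel_left,
    hseg.seg_eq_of_eq_mul_mul hΛ (mul_one _).symm hey (by rw [hey, he']),
    hseg.seg_eq_of_eq_mul_mul hΛ (α := 1) (γ := y * e') (by rw [one_mul, mul_assoc]) hΛ.map_one
      (by rw [hΛ.map_one, zero_add, he])] at this
  exact hne this.symm

theorem exists_isPeriodicPair_of_ne (hseg : IsSegmentMap d seg) (hΛ : IsTwoGraphDegree d)
    {e e' f f' : Λ} (he : d e = (1, 0)) (he' : d e' = (1, 0)) (hne : e ≠ e')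
    (hf : d f = (0, 1)) (hf' : d f' = (0, 1)) (hfne : f ≠ f') {m n : ℕ × ℕ} (hmn : m ≠ n)
    (h : IsPeriodicPair d seg m n) :
    ∃ a b : ℕ, 0 < a ∧ 0 < b ∧ IsPeriodicPair d seg (a, 0) (0, b) := by
  have hsurj := hΛ.surjective_of_edges he hf
  have hzero : ∀ w₁ w₂ : ℕ, (w₁, w₂) ≠ 0 → ¬ IsPeriodicPair d seg (w₁, w₂) 0 := by
    intro w₁ w₂ hw
    rcases Nat.eq_zero_or_pos w₁ with rfl | hw₁
    · refine not_isPeriodicPair_zero hseg hΛ hsurj (Prod.mk_le_mk.mpr ⟨le_rfl, ?_⟩) hf hf' hfne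
      exact Nat.pos_of_ne_zero (by simpa using hw)
    · exact not_isPeriodicPair_zero hseg hΛ hsurj (Prod.mk_le_mk.mpr ⟨hw₁, zero_le⟩) he he' hne
  obtain ⟨⟨u₁, u₂⟩, ⟨v₁, v₂⟩, hdisj, huv, hper⟩ :
      ∃ u v : ℕ × ℕ, u ⊓ v = 0 ∧ u ≠ v ∧ IsPeriodicPair d seg u v :=
    ⟨_, _, by ext <;> simp <;> omega,
      fun h' => hmn ((tsub_left_inj inf_le_left inf_le_right).mp h'), h.sub_inf hseg hΛ hsurj⟩
  have hdisj' : min u₁ v₁ = 0 ∧ min u₂ v₂ = 0 := by simpa [Prod.ext_iff] using hdisj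
  obtain ⟨rfl, rfl⟩ | ⟨rfl, rfl⟩ | ⟨rfl, rfl, hu₂, hv₁⟩ | ⟨rfl, rfl, hu₁, hv₂⟩ :
      (u₁ = 0 ∧ u₂ = 0) ∨ (v₁ = 0 ∧ v₂ = 0) ∨ (u₁ = 0 ∧ v₂ = 0 ∧ 0 < u₂ ∧ 0 < v₁) ∨
        (v₁ = 0 ∧ u₂ = 0 ∧ 0 < u₁ ∧ 0 < v₂) := by omega
  · exact (hzero v₁ v₂ huv.symm hper.symm).elim
  · exact (hzero u₁ u₂ huv hper).elim
  · exact ⟨v₁, u₂, hv₁, hu₂, hper.symm⟩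
  · exact ⟨u₁, v₂, hu₁, hv₂, hper⟩

theorem isPeriodicPair_iff {δ ε : ℕ × ℕ} (hδε : δ ⊓ ε = 0) :
    IsPeriodicPair d seg δ ε ↔
      ∀ lam : Λ, δ + ε ≤ d lam → seg lam δ (d lam - ε) = seg lam ε (d lam - δ) := by
  have hsup : δ ⊔ ε = δ + ε := by
    have : min δ.1 ε.1 = 0 ∧ min δ.2 ε.2 = 0 := by simpa [Prod.ext_iff] using hδε
    ext <;> simp <;> omega
  rw [IsPeriodicPair, hsup]
  refine forall₂_congr fun lam _ => ?_
  rw [add_tsub_add_eq_tsub_left, add_comm δ ε, add_tsub_add_eq_tsub_left]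

theorem exists_equiv_of_isPeriodicPair (hseg : IsSegmentMap d seg) (hΛ : IsTwoGraphDegree d)
    (hsurj : Surjective d) {δ ε : ℕ × ℕ} (hδε : δ ⊓ ε = 0) (h : IsPeriodicPair d seg δ ε) :
    ∃ γ : {μ : Λ // d μ = δ} ≃ {ν : Λ // d ν = ε},
      ∀ (μ : {μ : Λ // d μ = δ}) (ν : {ν : Λ // d ν = ε}), (μ : Λ) * ν = γ μ * γ.symm ν := by
  rw [isPeriodicPair_iff hδε] at h
  have hswap : ∀ (μ : {μ : Λ // d μ = δ}) (ν : {ν : Λ // d ν = ε}),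
      ∃ (ν' : {ν : Λ // d ν = ε}) (μ' : {μ : Λ // d μ = δ}), (μ : Λ) * ν = ν' * μ' := by
    intro μ ν
    obtain ⟨x, y, hx, hy, hxy⟩ :=
      hΛ.exists_eq_mul (lam := μ * ν) (p := ε) (q := δ) (by rw [hΛ.map_mul, μ.2, ν.2, add_comm])
    exact ⟨⟨x, hx⟩, ⟨y, hy⟩, hxy⟩
  choose r l hrl using hswap
  have hrl_eq : ∀ μ ν ρ, r (l μ ν) ρ = ν := by
    intro μ ν ρ
    have hdeg : d (μ * ν * ρ : Λ) = δ + ε + ε := by simp only [hΛ.map_mul, μ.2, ν.2, ρ.2]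
    have := h (μ * ν * ρ) (hdeg ▸ le_self_add)
    rw [hseg.seg_eq_of_eq_mul_mul hΛ rfl μ.2 (by rw [hdeg, μ.2, ν.2, add_tsub_cancel_right]),
      hseg.seg_eq_of_eq_mul_mul hΛ (α := r μ ν) (β := r (l μ ν) ρ) (γ := l (l μ ν) ρ)
        (by rw [hrl μ ν, mul_assoc, hrl (l μ ν) ρ, ← mul_assoc]) (r μ ν).2
        (by rw [hdeg, (r μ ν).2, (r _ _).2, add_assoc, add_tsub_cancel_left])] at this
    exact Subtype.ext this.symm
  have hlr_eq : ∀ σ μ ν, l σ (r μ ν) = μ := by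
    intro σ μ ν
    have hdeg : d (σ * μ * ν : Λ) = δ + δ + ε := by simp only [hΛ.map_mul, σ.2, μ.2, ν.2]
    have := h (σ * μ * ν) (by rw [hdeg, add_assoc]; exact le_add_self)
    rw [hseg.seg_eq_of_eq_mul_mul hΛ rfl σ.2 (by rw [hdeg, σ.2, μ.2, add_tsub_cancel_right]),
      hseg.seg_eq_of_eq_mul_mul hΛ (α := r σ (r μ ν)) (β := l σ (r μ ν)) (γ := l μ ν)
        (by rw [mul_assoc (σ : Λ), hrl μ ν, ← mul_assoc, hrl σ (r μ ν)]) (r _ _).2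
        (by rw [hdeg, (r _ _).2, (l _ _).2, add_assoc, add_tsub_cancel_left, add_comm])] at this
    exact Subtype.ext this.symm
  have : Nonempty {μ : Λ // d μ = δ} := nonempty_subtype.mpr (hsurj δ)
  have : Nonempty {ν : Λ // d ν = ε} := nonempty_subtype.mpr (hsurj ε)
  obtain ⟨γ, hγ⟩ := exists_equiv_of_switch r l hrl_eq hlr_eq
  exact ⟨γ, fun μ ν => by rw [hrl, (hγ μ ν).1, (hγ μ ν).2]⟩

theorem seg_sub_eq_of_equiv (hseg : IsSegmentMap d seg) (hΛ : IsTwoGraphDegree d)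
    {δ ε : ℕ × ℕ} (γ : {μ : Λ // d μ = δ} ≃ {ν : Λ // d ν = ε})
    (hγ : ∀ (μ : {μ : Λ // d μ = δ}) (ν : {ν : Λ // d ν = ε}), (μ : Λ) * ν = γ μ * γ.symm ν)
    {i j : ℕ} {lam : Λ} (hlam : d lam = (i + 1) • δ + (j + 1) • ε) :
    seg lam δ (d lam - ε) = seg lam ε (d lam - δ) := by
  obtain ⟨W, R, hW, hR, rfl⟩ := hΛ.exists_eq_mul hlam
  obtain ⟨A, C, hA, hC, hAC⟩ := hΛ.exists_eq_mul (hW.trans (succ_nsmul' δ i))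
  obtain ⟨C', A', hC', hA', hCA'⟩ := hΛ.exists_eq_mul (hW.trans (succ_nsmul δ i))
  obtain ⟨N, τ, hN, hτ, hNτ⟩ := hΛ.exists_eq_mul (hR.trans (succ_nsmul' ε j))
  obtain ⟨τ', N', hτ', hN', hτN'⟩ := hΛ.exists_eq_mul (hR.trans (succ_nsmul ε j))
  have hblue : C' * γ ⟨A', hA'⟩ = γ ⟨A, hA⟩ * C :=
    hΛ.mul_apply_eq_apply_mul_of_mul_eq (fun u => γ u)
      (fun u v => by simpa using hγ u (γ v)) i ⟨A, hA⟩ ⟨A', hA'⟩ hC hC' (hAC.symm.trans hCA')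
  have hred : γ.symm ⟨N, hN⟩ * τ = τ' * γ.symm ⟨N', hN'⟩ :=
    hΛ.apply_mul_eq_mul_apply_of_mul_eq (fun v => γ.symm v)
      (fun u v => by simpa using hγ (γ.symm u) v) j ⟨N, hN⟩ ⟨N', hN'⟩ hτ hτ'
      (hNτ.symm.trans hτN')
  have h₁ : W * R = A * (C * τ') * N' := by rw [hAC, hτN']; simp only [mul_assoc]
  have h₂ : W * R = γ ⟨A, hA⟩ * (C * τ') * γ.symm ⟨N', hN'⟩ :=
    calc W * R = C' * (A' * N) * τ := by rw [hCA', hNτ]; simp only [mul_assoc]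
      _ = C' * γ ⟨A', hA'⟩ * (γ.symm ⟨N, hN⟩ * τ) := by
        rw [(hγ ⟨A', hA'⟩ ⟨N, hN⟩ : A' * N = _)]; simp only [mul_assoc]
      _ = _ := by rw [hblue, hred]; simp only [mul_assoc]
  have hCτ : d (C * τ') = i • δ + j • ε := by rw [hΛ.map_mul, hC, hτ']
  rw [hseg.seg_eq_of_eq_mul_mul hΛ h₁ hA (eq_tsub_of_add_eq (by
      rw [hA, hCτ, hlam, succ_nsmul' δ i, succ_nsmul ε j]; abel)),
    hseg.seg_eq_of_eq_mul_mul hΛ h₂ (γ _).2 (eq_tsub_of_add_eq (by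
      rw [(γ _).2, hCτ, hlam, succ_nsmul' δ i, succ_nsmul ε j]; abel))]

theorem isPeriodicPair_of_equiv (hseg : IsSegmentMap d seg) (hΛ : IsTwoGraphDegree d)
    (hsurj : Surjective d) {a b : ℕ} (ha : 0 < a) (hb : 0 < b)
    (γ : {μ : Λ // d μ = (a, 0)} ≃ {ν : Λ // d ν = (0, b)})
    (hγ : ∀ (μ : {μ : Λ // d μ = (a, 0)}) (ν : {ν : Λ // d ν = (0, b)}),
      (μ : Λ) * ν = γ μ * γ.symm ν) :
    IsPeriodicPair d seg (a, 0) (0, b) := by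
  rw [isPeriodicPair_iff (by simp)]
  intro lam hlam
  have hab : a ≤ (d lam).1 ∧ b ≤ (d lam).2 := by simpa [Prod.le_def] using hlam
  obtain ⟨i, hi⟩ := Nat.exists_eq_add_one.mpr (ha.trans_le hab.1)
  obtain ⟨j, hj⟩ := Nat.exists_eq_add_one.mpr (hb.trans_le hab.2)
  obtain ⟨ρ, hρ⟩ := hsurj ((i + 1) * (a - 1), (j + 1) * (b - 1))
  refine hseg.seg_sub_eq_of_mul hΛ ρ hlam (seg_sub_eq_of_equiv hseg hΛ γ hγ (i := i) (j := j) ?_)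
  obtain ⟨a, rfl⟩ := Nat.exists_eq_add_one.mpr ha
  obtain ⟨b, rfl⟩ := Nat.exists_eq_add_one.mpr hb
  ext <;> simp [hΛ.map_mul, hρ, hi, hj] <;> ring

end

theorem stmt1_general {Λ : Type*} [Monoid Λ] (d : Λ → ℕ × ℕ)
    (hd : ∀ x y : Λ, d (x * y) = d x + d y)
    (hfac : ∀ (lam : Λ) (p q : ℕ × ℕ), d lam = p + q →
      ∃! mn : Λ × Λ, d mn.1 = p ∧ d mn.2 = q ∧ lam = mn.1 * mn.2)
    (seg : Λ → ℕ × ℕ → ℕ × ℕ → Λ)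
    (hseg : ∀ (lam : Λ) (p q : ℕ × ℕ), p ≤ q → q ≤ d lam →
      d (seg lam p q) = q - p ∧ ∃ α γ : Λ, d α = p ∧ lam = α * seg lam p q * γ)
    (h2B : 2 ≤ Nat.card {e : Λ | d e = (1, 0)}) (h2R : 2 ≤ Nat.card {e : Λ | d e = (0, 1)}) :
    (∃ m n : ℕ × ℕ, m ≠ n ∧ ∀ lam : Λ, m ⊔ n ≤ d lam →
        seg lam m (m + d lam - (m ⊔ n)) = seg lam n (n + d lam - (m ⊔ n))) ↔
    (∃ (a b : ℕ) (γ : {μ : Λ // d μ = (a, 0)} ≃ {ν : Λ // d ν = (0, b)}),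
      0 < a ∧ 0 < b ∧
        ∀ (μ : {μ : Λ // d μ = (a, 0)}) (ν : {ν : Λ // d ν = (0, b)}),
          (μ : Λ) * (ν : Λ) = (γ μ : Λ) * (γ.symm ν : Λ)) := by
  have hΛ : IsTwoGraphDegree d := ⟨hd, hfac⟩
  obtain ⟨e, he, e', he', hne⟩ := (Set.one_lt_ncard_iff_nontrivial_and_finite.mp h2B).1
  obtain ⟨f, hf, f', hf', hfne⟩ := (Set.one_lt_ncard_iff_nontrivial_and_finite.mp h2R).1
  have hsurj := hΛ.surjective_of_edges he hf
  constructor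
  · rintro ⟨m, n, hmn, hper⟩
    obtain ⟨a, b, ha, hb, hab⟩ :=
      exists_isPeriodicPair_of_ne hseg hΛ he he' hne hf hf' hfne hmn hper
    obtain ⟨γ, hγ⟩ := exists_equiv_of_isPeriodicPair hseg hΛ hsurj (by simp) hab
    exact ⟨a, b, γ, ha, hb, hγ⟩
  · rintro ⟨a, b, γ, ha, hb, hγ⟩
    exact ⟨(a, 0), (0, b), by simp [ha.ne'], isPeriodicPair_of_equiv hseg hΛ hsurj ha hb γ hγ⟩

/-- Davidson–Yang. A 2-graph with a single vertex is encoded as a monoid `Λ`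
with a degree map `d : Λ → ℕ²` that is additive and has the unique factorisation property
(`hfac`).  For `p ≤ q ≤ d lam`, `seg lam p q` is the segment `lam(p,q)`: the unique `β` of
degree `q - p` such that `lam = α * β * γ` with `d α = p` (`hseg`).  Assume `Λ` is finite with
at least two edges of each colour.  Then `Λ` is periodic (there are `m ≠ n` in `ℕ²` with
`lam(m, m + d lam - (m ⊔ n)) = lam(n, n + d lam - (m ⊔ n))` for all `lam` of degree `≥ m ⊔ n`)
if and only if there are positive integers `a`, `b` and a bijection
`γ : Λ^{(a,0)} → Λ^{(0,b)}` such that `μ * ν = γ μ * γ⁻¹ ν` for all `μ ∈ Λ^{(a,0)}`,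
`ν ∈ Λ^{(0,b)}`. -/
theorem stmt1 {Λ : Type*} [Monoid Λ] (d : Λ → ℕ × ℕ)
    (hd : ∀ x y : Λ, d (x * y) = d x + d y)
    (hfac : ∀ (lam : Λ) (p q : ℕ × ℕ), d lam = p + q →
      ∃! mn : Λ × Λ, d mn.1 = p ∧ d mn.2 = q ∧ lam = mn.1 * mn.2)
    (seg : Λ → ℕ × ℕ → ℕ × ℕ → Λ)
    (hseg : ∀ (lam : Λ) (p q : ℕ × ℕ), p ≤ q → q ≤ d lam →
      d (seg lam p q) = q - p ∧ ∃ α γ : Λ, d α = p ∧ lam = α * seg lam p q * γ)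
    (hfinB : {e : Λ | d e = (1, 0)}.Finite) (hfinR : {e : Λ | d e = (0, 1)}.Finite)
    (h2B : 2 ≤ Nat.card {e : Λ | d e = (1, 0)}) (h2R : 2 ≤ Nat.card {e : Λ | d e = (0, 1)}) :
    (∃ m n : ℕ × ℕ, m ≠ n ∧ ∀ lam : Λ, m ⊔ n ≤ d lam →
        seg lam m (m + d lam - (m ⊔ n)) = seg lam n (n + d lam - (m ⊔ n))) ↔
    (∃ (a b : ℕ) (γ : {μ : Λ // d μ = (a, 0)} ≃ {ν : Λ // d ν = (0, b)}),
      0 < a ∧ 0 < b ∧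
        ∀ (μ : {μ : Λ // d μ = (a, 0)}) (ν : {ν : Λ // d ν = (0, b)}),
          (μ : Λ) * (ν : Λ) = (γ μ : Λ) * (γ.symm ν : Λ)) :=
  stmt1_general d hd hfac seg hseg h2B h2R
end

section
/- Let G be an abelian group and let a, b be positive integers. Suppose the map g ↦ g^a is surjective on G, and that the subgroups K_c := {g ∈ G : g^c = 1} are finite for c = a and c = b. Then K_{ab} is finite and |K_{ab}| = |K_a| · |K_b|. -/
/-!
The power map `g ↦ g ^ a` sends `K_{ab}` onto `K_b` (onto because it is already onto on `G`,
and any preimage of an element of `K_b` lies in `K_{ab}`), and its kernel is `K_a`. Hence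
`|K_{ab}| = |K_a| ⬝ |K_b|`, which is nonzero, so `K_{ab}` is finite.
-/

theorem MonoidHom.ker_subgroupComap {G H : Type*} [Group G] [Group H] (f : G →* H)
    (N : Subgroup H) : (f.subgroupComap N).ker = f.ker.subgroupOf (N.comap f) := by
  ext x
  rw [MonoidHom.mem_ker, Subgroup.mem_subgroupOf, MonoidHom.mem_ker, ← Subtype.coe_inj]
  rfl

theorem Subgroup.card_comap_of_surjective {G H : Type*} [Group G] [Group H] (f : G →* H)
    (hf : Function.Surjective f) (N : Subgroup H) :
    Nat.card (N.comap f) = Nat.card N * Nat.card f.ker := by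
  have hker : f.ker ≤ N.comap f := fun x hx => by simp_all
  rw [card_eq_card_quotient_mul_card_subgroup (f.subgroupComap N).ker,
    Nat.card_congr (QuotientGroup.quotientKerEquivOfSurjective _
      (f.subgroupComap_surjective_of_surjective N hf)).toEquiv,
    MonoidHom.ker_subgroupComap, Nat.card_congr (subgroupOfEquivOfLe hker).toEquiv]

theorem setOf_pow_eq_one_eq_ker_powMonoidHom {G : Type*} [CommGroup G] (c : ℕ) :
    {g : G | g ^ c = 1} = ((powMonoidHom c : G →* G).ker : Set G) := by
  ext; simp

theorem ker_powMonoidHom_mul {G : Type*} [CommGroup G] (a b : ℕ) :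
    (powMonoidHom (a * b) : G →* G).ker =
      (powMonoidHom b : G →* G).ker.comap (powMonoidHom a) := by
  ext; simp [pow_mul]

theorem stmt2_general {G : Type*} [CommGroup G] (a b : ℕ)
    (hsurj : Function.Surjective (fun g : G => g ^ a))
    (hKa : {g : G | g ^ a = 1}.Finite) (hKb : {g : G | g ^ b = 1}.Finite) :
    {g : G | g ^ (a * b) = 1}.Finite ∧
      Nat.card {g : G | g ^ (a * b) = 1} =
        Nat.card {g : G | g ^ a = 1} * Nat.card {g : G | g ^ b = 1} := by
  have hcard : Nat.card {g : G | g ^ (a * b) = 1} =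
      Nat.card {g : G | g ^ a = 1} * Nat.card {g : G | g ^ b = 1} := by
    simp only [setOf_pow_eq_one_eq_ker_powMonoidHom, SetLike.coe_sort_coe, ker_powMonoidHom_mul]
    rw [Subgroup.card_comap_of_surjective _ hsurj, mul_comm]
  refine ⟨Set.finite_coe_iff.mp (Nat.finite_of_card_ne_zero ?_), hcard⟩
  have : Finite {g : G | g ^ a = 1} := hKa.to_subtype
  have : Finite {g : G | g ^ b = 1} := hKb.to_subtype
  have : ∀ c, Nonempty {g : G | g ^ c = 1} := fun c => ⟨⟨1, one_pow c⟩⟩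
  rw [hcard]
  exact Nat.mul_ne_zero Nat.card_pos.ne' Nat.card_pos.ne'

/-- Let `G` be an abelian group and `a, b` positive integers. If `g ↦ g ^ a`
is surjective on `G` and the torsion subgroups `K_a = {g | g ^ a = 1}` and `K_b = {g | g ^ b = 1}`
are finite, then `K_{ab}` is finite with `|K_{ab}| = |K_a| ⬝ |K_b|`. -/
theorem stmt2 {G : Type*} [CommGroup G] (a b : ℕ) (ha : 0 < a) (hb : 0 < b)
    (hsurj : Function.Surjective (fun g : G => g ^ a))
    (hKa : {g : G | g ^ a = 1}.Finite) (hKb : {g : G | g ^ b = 1}.Finite) :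
    {g : G | g ^ (a * b) = 1}.Finite ∧
      Nat.card {g : G | g ^ (a * b) = 1} =
        Nat.card {g : G | g ^ a = 1} * Nat.card {g : G | g ^ b = 1} :=
  stmt2_general a b hsurj hKa hKb
end

section
/- Let (p_i)_{i≥1} be a sequence of prime numbers and let Σ_P be the P-adic solenoid. Then the set of elements of finite order in Σ_P has empty interior; equivalently, the elements of infinite order are dense in Σ_P. -/
/-!
A one-parameter subgroup `t ↦ (exp (t / (p₀ ⋯ p_{i-1})))_i` runs through the solenoid, and the
zeroth coordinate of `x` times it is `x₀ · exp t`. Only countably many `t` make this torsion in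
the circle, so every `x` is a limit of points `x · exp t` of infinite order.
-/

/-- The `P`-adic solenoid associated to a sequence `p : ℕ → ℕ`: the subgroup
`{x ∈ ∏_{i} 𝕋 : x i = (x (i+1)) ^ (p i) for all i}` of the product group `ℕ → Circle`.
(As a topological space it carries the subspace topology from the product topology; this is
the inverse limit of the system `(𝕋, z ↦ z ^ (p i))`.) -/
noncomputable def solenoid (p : ℕ → ℕ) : Subgroup (ℕ → Circle) where
  carrier := {x | ∀ i, x i = x (i + 1) ^ p i}
  one_mem' := by intro i; simp
  mul_mem' := by
    intro x y hx hy i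
    simp only [Pi.mul_apply, mul_pow]
    rw [← hx i, ← hy i]
  inv_mem' := by
    intro x hx i
    simp only [Pi.inv_apply, inv_pow]
    rw [← hx i]

open Set

namespace Circle

lemma setOf_isOfFinOrder_exp_subset :
    {t : ℝ | IsOfFinOrder (exp t)} ⊆ range fun q : ℚ => (q : ℝ) * (2 * Real.pi) := by
  intro t ht
  obtain ⟨n, hn, hpow⟩ := isOfFinOrder_iff_pow_eq_one.mp ht
  rw [← exp_natCast_mul, exp_eq_one] at hpow
  obtain ⟨m, hm⟩ := hpow
  refine ⟨m / n, ?_⟩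
  have hn' : (n : ℝ) ≠ 0 := Nat.cast_ne_zero.mpr hn.ne'
  push_cast
  field_simp
  linarith

lemma countable_setOf_isOfFinOrder_mul_exp (z : Circle) :
    {t : ℝ | IsOfFinOrder (z * exp t)}.Countable := by
  obtain ⟨s, rfl⟩ := exp_surjective z
  have hshift : {t | IsOfFinOrder (exp s * exp t)} = (s + ·) ⁻¹' {t | IsOfFinOrder (exp t)} := by
    ext t
    simp [exp_add]
  rw [hshift]
  exact ((countable_range _).mono setOf_isOfFinOrder_exp_subset).preimage (add_right_injective s)

end Circle

lemma range_subset_closure_compl_of_countable_preimage {X : Type*} [TopologicalSpace X]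
    {S : Set X} {f : ℝ → X} (hf : Continuous f) (hS : (f ⁻¹' S).Countable) :
    range f ⊆ closure Sᶜ := by
  refine (hf.range_subset_closure_image_dense (hS.dense_compl ℝ)).trans (closure_mono ?_)
  rw [← preimage_compl]
  exact image_preimage_subset f Sᶜ

namespace solenoid

variable {p : ℕ → ℕ}

noncomputable def exp (hp : ∀ i, p i ≠ 0) (t : ℝ) : solenoid p :=
  ⟨fun i => Circle.exp (t / ∏ j ∈ Finset.range i, (p j : ℝ)), fun i => by
    have hpi : (p i : ℝ) ≠ 0 := Nat.cast_ne_zero.mpr (hp i)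
    rw [← Circle.exp_natCast_mul, Finset.prod_range_succ, ← div_div, mul_div_cancel₀ _ hpi]⟩

variable (hp : ∀ i, p i ≠ 0)

lemma continuous_exp : Continuous (exp hp) :=
  (continuous_pi fun _ => Circle.exp.continuous.comp (continuous_id.div_const _)).subtype_mk _

@[simp]
lemma exp_zero : exp hp 0 = 1 :=
  Subtype.ext <| funext fun _ => by simp [exp]

@[simp]
lemma exp_apply_zero (t : ℝ) : (exp hp t : ℕ → Circle) 0 = Circle.exp t := by
  simp [exp]

end solenoid

/-- For any sequence of primes `p`, the set of elements of finite order in the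
`P`-adic solenoid has empty interior; equivalently, the elements of infinite order are dense. -/
theorem stmt6 (p : ℕ → ℕ) (hp : ∀ i, (p i).Prime) :
    interior {x : solenoid p | IsOfFinOrder x} = ∅ ∧
      Dense {x : solenoid p | ¬ IsOfFinOrder x} := by
  have hp₀ : ∀ i, p i ≠ 0 := fun i => (hp i).ne_zero
  have hdense : Dense {x : solenoid p | ¬ IsOfFinOrder x} := by
    intro x
    let f : ℝ → solenoid p := fun t => x * solenoid.exp hp₀ t
    have hf : Continuous f := continuous_const.mul (solenoid.continuous_exp hp₀)
    have hcount : (f ⁻¹' {x | IsOfFinOrder x}).Countable :=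
      (Circle.countable_setOf_isOfFinOrder_mul_exp ((x : ℕ → Circle) 0)).mono fun t ht => by
        simpa [f] using ((Pi.evalMonoidHom _ 0).comp (solenoid p).subtype).isOfFinOrder ht
    simpa only [f, solenoid.exp_zero, mul_one, compl_ofPred] using
      range_subset_closure_compl_of_countable_preimage hf hcount (mem_range_self 0)
  exact ⟨interior_eq_empty_iff_dense_compl.2 hdense, hdense⟩
end

section
/- Let Λ be a 2-graph with a single vertex that is finite with at least two edges of each colour. If m ≠ n in ℕ² are such that λ(m, m + d(λ) − (m ∨ n)) = λ(n, n + d(λ) − (m ∨ n)) for all λ ∈ Λ with d(λ) ≥ m ∨ n, then m and n are incomparable: neither m ≤ n nor n ≤ m in the coordinatewise order. -/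
private theorem aux13 {Λ : Type*} [Monoid Λ] (d : Λ → ℕ × ℕ)
    (hd : ∀ x y : Λ, d (x * y) = d x + d y)
    (hfac : ∀ (lam : Λ) (p q : ℕ × ℕ), d lam = p + q →
      ∃! mn : Λ × Λ, d mn.1 = p ∧ d mn.2 = q ∧ lam = mn.1 * mn.2)
    (seg : Λ → ℕ × ℕ → ℕ × ℕ → Λ)
    (hseg : ∀ (lam : Λ) (p q : ℕ × ℕ), p ≤ q → q ≤ d lam →
      d (seg lam p q) = q - p ∧ ∃ α γ : Λ, d α = p ∧ lam = α * seg lam p q * γ)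
    (h2B : 2 ≤ Nat.card {e : Λ | d e = (1, 0)}) (h2R : 2 ≤ Nat.card {e : Λ | d e = (0, 1)})
    (m n : ℕ × ℕ) (hmn : m ≠ n) (hle : m ≤ n)
    (hper : ∀ lam : Λ, n ≤ d lam →
      seg lam m (m + d lam - n) = seg lam n (n + d lam - n)) : False := by
  have hle1 : m.1 ≤ n.1 := (Prod.le_def.mp hle).1
  have hle2 : m.2 ≤ n.2 := (Prod.le_def.mp hle).2
  set p : ℕ × ℕ := n - m with hpdef
  have hp1 : m.1 + p.1 = n.1 := by simp [hpdef]; omega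
  have hp2 : m.2 + p.2 = n.2 := by simp [hpdef]; omega
  have hp : m + p = n := by
    rw [Prod.ext_iff]; exact ⟨hp1, hp2⟩
  have hp0 : p ≠ 0 := by
    intro h
    apply hmn
    rw [h, add_zero] at hp
    exact hp
  -- degree of identity
  have hd1 : d (1 : Λ) = 0 := by
    have h := hd 1 1
    rw [one_mul] at h
    exact (left_eq_add.mp h)
  -- degree-zero elements are the identity
  have hone : ∀ u : Λ, d u = 0 → u = 1 := by
    intro u hu
    obtain ⟨mn', _, huniq⟩ := hfac u 0 0 (by simp [hu])
    have h1 := huniq (1, u) ⟨hd1, hu, (one_mul u).symm⟩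
    have h2 := huniq (u, 1) ⟨hu, hd1, (mul_one u).symm⟩
    have h3 : ((1 : Λ), u) = (u, (1 : Λ)) := h1.trans h2.symm
    exact ((Prod.mk.injEq _ _ _ _).mp h3).1.symm
  -- uniqueness of factorisations
  have hufac : ∀ a b a' b' : Λ, a * b = a' * b' → d a = d a' → a = a' ∧ b = b' := by
    intro a b a' b' hab hda
    obtain ⟨mn', _, huniq⟩ := hfac (a * b) (d a) (d b) (hd a b)
    have hdb : d b' = d b := by
      have h := hd a b
      rw [hab, hd, hda] at h
      exact add_left_cancel h
    have h1 := huniq (a, b) ⟨rfl, rfl, rfl⟩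
    have h2 := huniq (a', b') ⟨hda.symm, hdb, hab⟩
    have h3 := h1.trans h2.symm
    exact ⟨congrArg Prod.fst h3, congrArg Prod.snd h3⟩
  -- two distinct elements of a given degree from the cardinality assumption
  have twoOf : ∀ q : ℕ × ℕ, 2 ≤ Nat.card {e : Λ | d e = q} →
      ∃ e e' : Λ, d e = q ∧ d e' = q ∧ e ≠ e' := by
    intro q h
    have hfin : Finite {e : Λ | d e = q} :=
      (Nat.card_pos_iff.mp (by omega)).2
    have hnt : Nontrivial {e : Λ | d e = q} :=
      Finite.one_lt_card_iff_nontrivial.mp (by omega)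
    obtain ⟨⟨e, he⟩, ⟨e', he'⟩, hne⟩ := hnt
    exact ⟨e, e', he, he', fun h => hne (by simp [Subtype.ext_iff, h])⟩
  obtain ⟨eB, eB', heB, heB', hneB⟩ := twoOf (1, 0) h2B
  obtain ⟨eR, eR', heR, heR', hneR⟩ := twoOf (0, 1) h2R
  have hpow : ∀ (x : Λ) (k : ℕ), d (x ^ k) = k • d x := by
    intro x k
    induction k with
    | zero => simp [hd1]
    | succ k ih => rw [pow_succ, hd, ih, succ_nsmul]
  -- existence of elements of every degree
  have hex : ∀ q : ℕ × ℕ, ∃ x : Λ, d x = q := by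
    intro q
    refine ⟨eB ^ q.1 * eR ^ q.2, ?_⟩
    rw [hd, hpow, hpow, heB, heR]
    rw [Prod.ext_iff]
    simp
  -- two distinct elements of degree p
  have hcc : ∃ c c' : Λ, d c = p ∧ d c' = p ∧ c ≠ c' := by
    rcases Nat.eq_zero_or_pos p.1 with h1 | h1
    · have h2 : 1 ≤ p.2 := by
        rcases Nat.eq_zero_or_pos p.2 with h2 | h2
        · exact absurd (Prod.ext h1 h2) hp0
        · exact h2
      obtain ⟨x, hx⟩ := hex (p.1, p.2 - 1)
      refine ⟨eR * x, eR' * x, ?_, ?_, ?_⟩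
      · rw [hd, heR, hx, Prod.ext_iff]; simp; omega
      · rw [hd, heR', hx, Prod.ext_iff]; simp; omega
      · intro h
        exact hneR (hufac _ _ _ _ h (heR.trans heR'.symm)).1
    · obtain ⟨x, hx⟩ := hex (p.1 - 1, p.2)
      refine ⟨eB * x, eB' * x, ?_, ?_, ?_⟩
      · rw [hd, heB, hx, Prod.ext_iff]; simp; omega
      · rw [hd, heB', hx, Prod.ext_iff]; simp; omega
      · intro h
        exact hneB (hufac _ _ _ _ h (heB.trans heB'.symm)).1
  obtain ⟨c, c', hc, hc', hcc'⟩ := hcc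
  obtain ⟨μ, hμ⟩ := hex n
  -- key claim: any right factor of degree p following μ is uniquely determined
  have hkey : ∀ γ : Λ, d γ = p → ∀ a b : Λ, μ = a * b → d a = m → γ = b := by
    intro γ hγ a b hab hda
    set lam := μ * γ with hlam
    have hdlam : d lam = n + p := by rw [hlam, hd, hμ, hγ]
    have hnle : n ≤ d lam := by
      rw [hdlam, Prod.le_def]
      constructor <;> simp
    have hnnp : n ≤ n + p := by
      rw [Prod.le_def]
      constructor <;> simp
    have hper1 := hper lam hnle
    have e1 : m + d lam - n = n := by
      rw [hdlam, Prod.ext_iff]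
      simp only [Prod.fst_add, Prod.snd_add, Prod.fst_sub, Prod.snd_sub]
      omega
    have e2 : n + d lam - n = n + p := by
      rw [hdlam, Prod.ext_iff]
      simp only [Prod.fst_add, Prod.snd_add, Prod.fst_sub, Prod.snd_sub]
      omega
    rw [e1, e2] at hper1
    -- compute seg lam n (n+p) = γ
    obtain ⟨hdseg2, α₂, γ₂, hα₂, hfac2⟩ := hseg lam n (n + p) hnnp (le_of_eq hdlam.symm)
    have hγ₂0 : d γ₂ = 0 := by
      have h := congrArg d hfac2
      rw [hd, hd, hd, hμ, hγ, hα₂, hdseg2] at h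
      rw [Prod.ext_iff] at h ⊢
      simp only [Prod.fst_add, Prod.snd_add, Prod.fst_sub, Prod.snd_sub,
        Prod.fst_zero, Prod.snd_zero] at h ⊢
      omega
    have hγ₂1 : γ₂ = 1 := hone _ hγ₂0
    rw [hγ₂1, mul_one] at hfac2
    have hseg2eq : seg lam n (n + p) = γ :=
      ((hufac μ γ α₂ (seg lam n (n + p)) (hlam.symm.trans hfac2)
        (hμ.trans hα₂.symm)).2).symm
    -- compute seg lam m n = b
    obtain ⟨hdseg3, α₃, γ₃, hα₃, hfac3⟩ := hseg lam m n hle hnle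
    have hdb : d b = n - m := by
      have h := hd a b
      rw [← hab, hμ, hda, Prod.ext_iff] at h
      rw [Prod.ext_iff]
      simp only [Prod.fst_add, Prod.snd_add, Prod.fst_sub, Prod.snd_sub] at h ⊢
      omega
    have heq : a * (b * γ) = α₃ * (seg lam m n * γ₃) := by
      have h1 : a * (b * γ) = lam := by rw [← mul_assoc, ← hab, ← hlam]
      have h2 : α₃ * (seg lam m n * γ₃) = lam := by rw [← mul_assoc, ← hfac3]
      rw [h1, h2]
    have hstep1 := hufac a (b * γ) α₃ (seg lam m n * γ₃) heq (hda.trans hα₃.symm)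
    have hstep2 := hufac b γ (seg lam m n) γ₃ hstep1.2 (hdb.trans hdseg3.symm)
    exact (hstep2.1.trans (hper1.trans hseg2eq)).symm
  obtain ⟨mn', ⟨hda', hdb', hab'⟩, _⟩ := hfac μ m p (hμ.trans hp.symm)
  have h1 : c = mn'.2 := hkey c hc mn'.1 mn'.2 hab' hda'
  have h2 : c' = mn'.2 := hkey c' hc' mn'.1 mn'.2 hab' hda'
  exact hcc' (h1.trans h2.symm)

/-- Let `Λ` be a 2-graph with a single vertex (a monoid with an additive
degree map `d : Λ → ℕ²` having the unique factorisation property), finite with at least two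
edges of each colour.  For `p ≤ q ≤ d lam`, `seg lam p q` denotes the segment `lam(p,q)`.
If `m ≠ n` in `ℕ²` satisfy `lam(m, m + d lam - (m ⊔ n)) = lam(n, n + d lam - (m ⊔ n))` for all
`lam` with `d lam ≥ m ⊔ n`, then `m` and `n` are incomparable: neither `m ≤ n` nor `n ≤ m`. -/
theorem stmt13 {Λ : Type*} [Monoid Λ] (d : Λ → ℕ × ℕ)
    (hd : ∀ x y : Λ, d (x * y) = d x + d y)
    (hfac : ∀ (lam : Λ) (p q : ℕ × ℕ), d lam = p + q →
      ∃! mn : Λ × Λ, d mn.1 = p ∧ d mn.2 = q ∧ lam = mn.1 * mn.2)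
    (seg : Λ → ℕ × ℕ → ℕ × ℕ → Λ)
    (hseg : ∀ (lam : Λ) (p q : ℕ × ℕ), p ≤ q → q ≤ d lam →
      d (seg lam p q) = q - p ∧ ∃ α γ : Λ, d α = p ∧ lam = α * seg lam p q * γ)
    (hfinB : {e : Λ | d e = (1, 0)}.Finite) (hfinR : {e : Λ | d e = (0, 1)}.Finite)
    (h2B : 2 ≤ Nat.card {e : Λ | d e = (1, 0)}) (h2R : 2 ≤ Nat.card {e : Λ | d e = (0, 1)})
    (m n : ℕ × ℕ) (hmn : m ≠ n)
    (hper : ∀ lam : Λ, m ⊔ n ≤ d lam →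
      seg lam m (m + d lam - (m ⊔ n)) = seg lam n (n + d lam - (m ⊔ n))) :
    ¬ m ≤ n ∧ ¬ n ≤ m := by
  constructor
  · intro h
    have hsup : m ⊔ n = n := sup_eq_right.mpr h
    exact aux13 d hd hfac seg hseg h2B h2R m n hmn h (fun lam hl => by
      have h' := hper lam (by rw [hsup]; exact hl)
      rwa [hsup] at h')
  · intro h
    have hsup : m ⊔ n = m := sup_eq_left.mpr h
    exact aux13 d hd hfac seg hseg h2B h2R n m (Ne.symm hmn) h (fun lam hl => by
      have h' := hper lam (by rw [hsup]; exact hl)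
      rw [hsup] at h'
      exact h'.symm)
end

section
/- Let Λ be a 2-graph with a single vertex that is finite with at least two edges of each colour. Suppose m ≠ n in ℕ² satisfy λ(m, m + d(λ) − (m ∨ n)) = λ(n, n + d(λ) − (m ∨ n)) for all λ ∈ Λ with d(λ) ≥ m ∨ n, and suppose a, b are positive integers with m = (m ∧ n) + (a,0) and n = (m ∧ n) + (0,b). Then for every λ ∈ Λ with d(λ) ≥ (a,b) one has λ((a,0), d(λ) − (0,b)) = λ((0,b), d(λ) − (a,0)). -/
/-!
Choose `μ` of degree `m ⊓ n` (a product of edges of the two colours) and apply the periodicity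
hypothesis to `μ * lam`, whose degree is at least `m ⊔ n = d μ + (a, b)`. Both segments it
compares start after the prefix `μ`, and by unique factorisation a segment of `μ * lam` that
starts after `μ` is the corresponding segment of `lam`, shifted by `d μ`.
-/

namespace SingleVertexGraph

variable {Λ M : Type*} [Monoid Λ]

section

variable [AddMonoid M] [IsLeftCancelAdd M] {d : Λ → M}

theorem degree_one (hd : ∀ x y : Λ, d (x * y) = d x + d y) : d 1 = 0 :=
  left_eq_add.mp (by simpa only [mul_one] using hd 1 1)

theorem degree_pow (hd : ∀ x y : Λ, d (x * y) = d x + d y) (x : Λ) (i : ℕ) :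
    d (x ^ i) = i • d x := by
  induction i with
  | zero => simpa using degree_one hd
  | succ i ih => rw [pow_succ, hd, ih, succ_nsmul]

theorem eq_and_eq_of_mul_eq_mul (hd : ∀ x y : Λ, d (x * y) = d x + d y)
    (hfac : ∀ (lam : Λ) (p q : M), d lam = p + q →
      ∃! mn : Λ × Λ, d mn.1 = p ∧ d mn.2 = q ∧ lam = mn.1 * mn.2)
    {α β α' β' : Λ} (h : α * β = α' * β') (hα : d α = d α') : α = α' ∧ β = β' := by
  have hβ : d β = d β' := add_left_cancel (by rw [← hd, hα, ← hd, h])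
  obtain ⟨_, -, huniq⟩ := hfac (α * β) (d α) (d β) (hd α β)
  have h₁ := huniq (α, β) ⟨rfl, rfl, rfl⟩
  have h₂ := huniq (α', β') ⟨hα.symm, hβ.symm, h⟩
  exact Prod.ext_iff.mp (h₁.trans h₂.symm)

end

theorem degree_pow_mul_pow {d : Λ → ℕ × ℕ} (hd : ∀ x y : Λ, d (x * y) = d x + d y) {e f : Λ}
    (he : d e = (1, 0)) (hf : d f = (0, 1)) (c : ℕ × ℕ) : d (e ^ c.1 * f ^ c.2) = c := by
  rw [hd, degree_pow hd, degree_pow hd, he, hf]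
  ext <;> simp

variable [AddCommMonoid M] [PartialOrder M] [IsOrderedCancelAddMonoid M] [CanonicallyOrderedAdd M]
  [Sub M] [OrderedSub M] {d : Λ → M} (hd : ∀ x y : Λ, d (x * y) = d x + d y)
  (hfac : ∀ (lam : Λ) (p q : M), d lam = p + q →
    ∃! mn : Λ × Λ, d mn.1 = p ∧ d mn.2 = q ∧ lam = mn.1 * mn.2)
  {seg : Λ → M → M → Λ}
  (hseg : ∀ (lam : Λ) (p q : M), p ≤ q → q ≤ d lam →
    d (seg lam p q) = q - p ∧ ∃ α γ : Λ, d α = p ∧ lam = α * seg lam p q * γ)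
include hd hfac hseg

theorem seg_mul_mul (α β γ : Λ) : seg (α * β * γ) (d α) (d α + d β) = β := by
  obtain ⟨hds, α', γ', hα', hx⟩ :=
    hseg (α * β * γ) (d α) (d α + d β) le_self_add (by rw [hd, hd]; exact le_self_add)
  rw [add_tsub_cancel_left] at hds
  replace hx : α * (β * γ) = α' * (seg (α * β * γ) (d α) (d α + d β) * γ') := by
    simpa only [mul_assoc] using hx
  have hsuffix := (eq_and_eq_of_mul_eq_mul hd hfac hx hα'.symm).2
  exact ((eq_and_eq_of_mul_eq_mul hd hfac hsuffix hds.symm).1).symm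

theorem seg_mul_add_add (μ x : Λ) {p q : M} (hpq : p ≤ q) (hq : q ≤ d x) :
    seg (μ * x) (d μ + p) (d μ + q) = seg x p q := by
  obtain ⟨hds, α, γ, hα, hx⟩ := hseg x p q hpq hq
  have hprefix : d (μ * α) = d μ + p := by rw [hd, hα]
  have hend : d μ + q = d (μ * α) + d (seg x p q) := by
    rw [hprefix, hds, add_assoc, add_tsub_cancel_of_le hpq]
  have hμx : μ * x = μ * α * seg x p q * γ := by
    conv_lhs => rw [hx]
    simp only [mul_assoc]
  rw [hμx, hend, ← hprefix, seg_mul_mul hd hfac hseg]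

end SingleVertexGraph

open SingleVertexGraph in
theorem stmt14_general {Λ : Type*} [Monoid Λ] (d : Λ → ℕ × ℕ)
    (hd : ∀ x y : Λ, d (x * y) = d x + d y)
    (hfac : ∀ (lam : Λ) (p q : ℕ × ℕ), d lam = p + q →
      ∃! mn : Λ × Λ, d mn.1 = p ∧ d mn.2 = q ∧ lam = mn.1 * mn.2)
    (seg : Λ → ℕ × ℕ → ℕ × ℕ → Λ)
    (hseg : ∀ (lam : Λ) (p q : ℕ × ℕ), p ≤ q → q ≤ d lam →
      d (seg lam p q) = q - p ∧ ∃ α γ : Λ, d α = p ∧ lam = α * seg lam p q * γ)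
    (h2B : 2 ≤ Nat.card {e : Λ | d e = (1, 0)}) (h2R : 2 ≤ Nat.card {e : Λ | d e = (0, 1)})
    (m n : ℕ × ℕ)
    (hper : ∀ lam : Λ, m ⊔ n ≤ d lam →
      seg lam m (m + d lam - (m ⊔ n)) = seg lam n (n + d lam - (m ⊔ n)))
    (a b : ℕ)
    (hm : m = m ⊓ n + (a, 0)) (hn : n = m ⊓ n + (0, b)) :
    ∀ lam : Λ, (a, b) ≤ d lam →
      seg lam (a, 0) (d lam - (0, b)) = seg lam (0, b) (d lam - (a, 0)) := by
  intro lam hlam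
  obtain ⟨⟨e, he⟩⟩ := (Nat.card_pos_iff.mp (by omega : 0 < Nat.card {e : Λ | d e = (1, 0)})).1
  obtain ⟨⟨f, hf⟩⟩ := (Nat.card_pos_iff.mp (by omega : 0 < Nat.card {e : Λ | d e = (0, 1)})).1
  obtain ⟨μ, hμ⟩ : ∃ μ, d μ = m ⊓ n := ⟨_, degree_pow_mul_pow hd he hf _⟩
  rw [← hμ] at hm hn
  obtain ⟨hla, hlb⟩ := Prod.le_def.mp hlam
  have hsup : m ⊔ n = d μ + (a, b) := by
    rw [hm, hn]
    ext <;> simp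
  have hper' := hper (μ * lam) (by rw [hsup, hd]; exact add_le_add_right hlam _)
  have hleft : m + d (μ * lam) - (m ⊔ n) = d μ + (d lam - (0, b)) := by
    rw [hsup, hd, hm]
    ext <;> simp; omega
  have hright : n + d (μ * lam) - (m ⊔ n) = d μ + (d lam - (a, 0)) := by
    rw [hsup, hd, hn]
    ext <;> simp; omega
  have hseg_left := seg_mul_add_add hd hfac hseg μ lam
    (Prod.le_def.mpr ⟨by simpa using hla, by simp⟩ : (a, 0) ≤ d lam - (0, b)) tsub_le_self
  have hseg_right := seg_mul_add_add hd hfac hseg μ lam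
    (Prod.le_def.mpr ⟨by simp, by simpa using hlb⟩ : (0, b) ≤ d lam - (a, 0)) tsub_le_self
  rwa [hleft, hright, hm, hn, hseg_left, hseg_right] at hper'

/-- Let `Λ` be a 2-graph with a single vertex (a monoid with an additive
degree map `d : Λ → ℕ²` having the unique factorisation property), finite with at least two
edges of each colour.  For `p ≤ q ≤ d lam`, `seg lam p q` denotes the segment `lam(p,q)`.
Suppose `m ≠ n` in `ℕ²` satisfy `lam(m, m + d lam - (m ⊔ n)) = lam(n, n + d lam - (m ⊔ n))`
for all `lam` with `d lam ≥ m ⊔ n`, and `a, b` are positive integers with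
`m = (m ⊓ n) + (a,0)` and `n = (m ⊓ n) + (0,b)`.  Then every `lam` with `d lam ≥ (a,b)`
satisfies `lam((a,0), d lam - (0,b)) = lam((0,b), d lam - (a,0))`. -/
theorem stmt14 {Λ : Type*} [Monoid Λ] (d : Λ → ℕ × ℕ)
    (hd : ∀ x y : Λ, d (x * y) = d x + d y)
    (hfac : ∀ (lam : Λ) (p q : ℕ × ℕ), d lam = p + q →
      ∃! mn : Λ × Λ, d mn.1 = p ∧ d mn.2 = q ∧ lam = mn.1 * mn.2)
    (seg : Λ → ℕ × ℕ → ℕ × ℕ → Λ)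
    (hseg : ∀ (lam : Λ) (p q : ℕ × ℕ), p ≤ q → q ≤ d lam →
      d (seg lam p q) = q - p ∧ ∃ α γ : Λ, d α = p ∧ lam = α * seg lam p q * γ)
    (hfinB : {e : Λ | d e = (1, 0)}.Finite) (hfinR : {e : Λ | d e = (0, 1)}.Finite)
    (h2B : 2 ≤ Nat.card {e : Λ | d e = (1, 0)}) (h2R : 2 ≤ Nat.card {e : Λ | d e = (0, 1)})
    (m n : ℕ × ℕ) (hmn : m ≠ n)
    (hper : ∀ lam : Λ, m ⊔ n ≤ d lam →
      seg lam m (m + d lam - (m ⊔ n)) = seg lam n (n + d lam - (m ⊔ n)))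
    (a b : ℕ) (ha : 0 < a) (hb : 0 < b)
    (hm : m = m ⊓ n + (a, 0)) (hn : n = m ⊓ n + (0, b)) :
    ∀ lam : Λ, (a, b) ≤ d lam →
      seg lam (a, 0) (d lam - (0, b)) = seg lam (0, b) (d lam - (a, 0)) :=
  stmt14_general d hd hfac seg hseg h2B h2R m n hper a b hm hn
end

section
/- Let Λ be a 2-graph with a single vertex that is finite with at least two edges of each colour, and let a, b be positive integers such that λ((a,0), d(λ) − (0,b)) = λ((0,b), d(λ) − (a,0)) for all λ ∈ Λ with d(λ) ≥ (a,b). Then for each μ ∈ Λ^{(a,0)} there is a unique element γ(μ) ∈ Λ^{(0,b)} such that (αμ)((a,0),(a,b)) = γ(μ) = (μβ)((0,0),(0,b)) for all α, β ∈ Λ^{(0,b)}. -/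
/-!
Apply the hypothesis to `α μ β` with `d α = d β = (0,b)` and `d μ = (a,0)`, which has degree
`(a, 2b)`: by unique factorisation its left side is the segment of `α μ` from `(a,0)` to `(a,b)`, its right side the
segment of `μ β` from `(0,0)` to `(0,b)`. So the first depends only on `μ` and `α`, the second
only on `μ` and `β`, and they agree; hence both are independent of `α` and `β`. Some `β` of
degree `(0,b)` exists as a power of an edge of degree `(0,1)`.
-/

section TwoGraph

variable {Λ : Type*} [Monoid Λ] {d : Λ → ℕ × ℕ}
variable (hd : ∀ x y : Λ, d (x * y) = d x + d y)
    (hfac : ∀ (lam : Λ) (p q : ℕ × ℕ), d lam = p + q →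
      ∃! mn : Λ × Λ, d mn.1 = p ∧ d mn.2 = q ∧ lam = mn.1 * mn.2)
    {seg : Λ → ℕ × ℕ → ℕ × ℕ → Λ}
    (hseg : ∀ (lam : Λ) (p q : ℕ × ℕ), p ≤ q → q ≤ d lam →
      d (seg lam p q) = q - p ∧ ∃ α γ : Λ, d α = p ∧ lam = α * seg lam p q * γ)

include hd in
theorem degree_one : d 1 = 0 := by
  simpa using hd 1 1

include hd in
theorem degree_pow (e : Λ) (n : ℕ) : d (e ^ n) = n • d e := by
  induction n with
  | zero => simp [degree_one hd]
  | succ n ih => rw [pow_succ, hd, ih, succ_nsmul]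

include hd hfac in
theorem eq_and_eq_of_mul_eq_mul {x y x' y' : Λ} (h : x * y = x' * y') (hx : d x = d x') :
    x = x' ∧ y = y' := by
  have hy : d y' = d y := by
    have := congrArg d h
    rw [hd, hd, hx] at this
    exact (add_left_cancel this).symm
  obtain ⟨_, _, hu⟩ := hfac (x * y) (d x) (d y) (hd x y)
  have := (hu (x, y) ⟨rfl, rfl, rfl⟩).trans (hu (x', y') ⟨hx.symm, hy, h⟩).symm
  exact Prod.ext_iff.mp this

include hd hfac hseg

theorem seg_eq_of_eq_mul_mul {lam A s C : Λ} {p q : ℕ × ℕ} (hpq : p ≤ q) (hq : q ≤ d lam)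
    (h : lam = A * s * C) (hA : d A = p) (hs : d s = q - p) : seg lam p q = s := by
  obtain ⟨hds, α, γ, hα, hlam⟩ := hseg lam p q hpq hq
  rw [hlam, mul_assoc, mul_assoc] at h
  have hαA := eq_and_eq_of_mul_eq_mul hd hfac h (hα.trans hA.symm)
  exact (eq_and_eq_of_mul_eq_mul hd hfac hαA.2 (hds.trans hs.symm)).1

theorem seg_mul_right {lam : Λ} (ν : Λ) {p q : ℕ × ℕ} (hpq : p ≤ q) (hq : q ≤ d lam) :
    seg (lam * ν) p q = seg lam p q := by
  obtain ⟨hds, α, γ, hα, hlam⟩ := hseg lam p q hpq hq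
  refine seg_eq_of_eq_mul_mul hd hfac hseg hpq ?_ ?_ hα hds (C := γ * ν)
  · rw [hd]; exact le_add_right hq
  · rw [← mul_assoc, ← hlam]

theorem seg_mul_left {lam : Λ} (ν : Λ) {p q : ℕ × ℕ} (hpq : p ≤ q) (hq : q ≤ d lam) :
    seg (ν * lam) (d ν + p) (d ν + q) = seg lam p q := by
  obtain ⟨hds, α, γ, hα, hlam⟩ := hseg lam p q hpq hq
  refine seg_eq_of_eq_mul_mul hd hfac hseg (by gcongr) ?_ ?_
    (A := ν * α) (C := γ) (by rw [hd, hα]) (by rw [hds, add_tsub_add_eq_tsub_left])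
  · rw [hd]; gcongr
  · conv_lhs => rw [hlam]
    simp only [mul_assoc]

theorem seg_mul_eq_seg_mul {a b : ℕ}
    (heq : ∀ lam : Λ, (a, b) ≤ d lam →
      seg lam (a, 0) (d lam - (0, b)) = seg lam (0, b) (d lam - (a, 0)))
    {α μ β : Λ} (hα : d α = (0, b)) (hμ : d μ = (a, 0)) (hβ : d β = (0, b)) :
    seg (α * μ) (a, 0) (a, b) = seg (μ * β) (0, 0) (0, b) := by
  have hdeg : d (α * μ * β) = (a, b + b) := by simp [hd, hα, hμ, hβ]
  calc seg (α * μ) (a, 0) (a, b)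
      = seg (α * μ * β) (a, 0) (a, b) :=
        (seg_mul_right hd hfac hseg β (by simp) (by simp [hd, hα, hμ])).symm
    _ = seg (α * μ * β) (0, b) (0, b + b) := by
        simpa [hdeg] using heq (α * μ * β) (by simp [hdeg])
    _ = seg (α * (μ * β)) (d α + (0, 0)) (d α + (0, b)) := by simp [hα, mul_assoc]
    _ = seg (μ * β) (0, 0) (0, b) :=
        seg_mul_left hd hfac hseg α (by simp) (by simp [hd, hμ, hβ])

end TwoGraph

theorem stmt15_general {Λ : Type*} [Monoid Λ] (d : Λ → ℕ × ℕ)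
    (hd : ∀ x y : Λ, d (x * y) = d x + d y)
    (hfac : ∀ (lam : Λ) (p q : ℕ × ℕ), d lam = p + q →
      ∃! mn : Λ × Λ, d mn.1 = p ∧ d mn.2 = q ∧ lam = mn.1 * mn.2)
    (seg : Λ → ℕ × ℕ → ℕ × ℕ → Λ)
    (hseg : ∀ (lam : Λ) (p q : ℕ × ℕ), p ≤ q → q ≤ d lam →
      d (seg lam p q) = q - p ∧ ∃ α γ : Λ, d α = p ∧ lam = α * seg lam p q * γ)
    (h2R : 2 ≤ Nat.card {e : Λ | d e = (0, 1)})
    (a b : ℕ)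
    (heq : ∀ lam : Λ, (a, b) ≤ d lam →
      seg lam (a, 0) (d lam - (0, b)) = seg lam (0, b) (d lam - (a, 0))) :
    ∀ μ : Λ, d μ = (a, 0) →
      ∃! g : Λ, d g = (0, b) ∧
        (∀ α : Λ, d α = (0, b) → seg (α * μ) (a, 0) (a, b) = g) ∧
        (∀ β : Λ, d β = (0, b) → seg (μ * β) (0, 0) (0, b) = g) := by
  intro μ hμ
  obtain ⟨⟨e, he⟩⟩ : Nonempty {e : Λ | d e = (0, 1)} := (Nat.card_pos_iff.mp (by omega)).1
  have hβ₀ : d (e ^ b) = (0, b) := by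
    rw [degree_pow hd, show d e = (0, 1) from he]
    simp
  have key {α β : Λ} := seg_mul_eq_seg_mul hd hfac hseg heq (α := α) (μ := μ) (β := β)
  refine ⟨seg (μ * e ^ b) (0, 0) (0, b), ⟨?_, fun α hα => key hα hμ hβ₀,
    fun β hβ => (key hβ₀ hμ hβ).symm.trans (key hβ₀ hμ hβ₀)⟩,
    fun g ⟨_, _, hg⟩ => (hg _ hβ₀).symm⟩
  rw [(hseg _ _ _ (by simp) (by simp [hd, hμ, hβ₀])).1]
  simp

/-- Let `Λ` be a 2-graph with a single vertex (a monoid with an additive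
degree map `d : Λ → ℕ²` having the unique factorisation property), finite with at least two
edges of each colour.  For `p ≤ q ≤ d lam`, `seg lam p q` denotes the segment `lam(p,q)`.
Let `a, b` be positive integers such that `lam((a,0), d lam - (0,b)) = lam((0,b), d lam - (a,0))`
for all `lam` with `d lam ≥ (a,b)`.  Then for each `μ ∈ Λ^{(a,0)}` there is a unique
`g ∈ Λ^{(0,b)}` such that `(α * μ)((a,0),(a,b)) = g = (μ * β)((0,0),(0,b))` for all
`α, β ∈ Λ^{(0,b)}`. -/
theorem stmt15 {Λ : Type*} [Monoid Λ] (d : Λ → ℕ × ℕ)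
    (hd : ∀ x y : Λ, d (x * y) = d x + d y)
    (hfac : ∀ (lam : Λ) (p q : ℕ × ℕ), d lam = p + q →
      ∃! mn : Λ × Λ, d mn.1 = p ∧ d mn.2 = q ∧ lam = mn.1 * mn.2)
    (seg : Λ → ℕ × ℕ → ℕ × ℕ → Λ)
    (hseg : ∀ (lam : Λ) (p q : ℕ × ℕ), p ≤ q → q ≤ d lam →
      d (seg lam p q) = q - p ∧ ∃ α γ : Λ, d α = p ∧ lam = α * seg lam p q * γ)
    (hfinB : {e : Λ | d e = (1, 0)}.Finite) (hfinR : {e : Λ | d e = (0, 1)}.Finite)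
    (h2B : 2 ≤ Nat.card {e : Λ | d e = (1, 0)}) (h2R : 2 ≤ Nat.card {e : Λ | d e = (0, 1)})
    (a b : ℕ) (ha : 0 < a) (hb : 0 < b)
    (heq : ∀ lam : Λ, (a, b) ≤ d lam →
      seg lam (a, 0) (d lam - (0, b)) = seg lam (0, b) (d lam - (a, 0))) :
    ∀ μ : Λ, d μ = (a, 0) →
      ∃! g : Λ, d g = (0, b) ∧
        (∀ α : Λ, d α = (0, b) → seg (α * μ) (a, 0) (a, b) = g) ∧
        (∀ β : Λ, d β = (0, b) → seg (μ * β) (0, 0) (0, b) = g) :=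
  stmt15_general d hd hfac seg hseg h2R a b heq
end

section
/- Let Λ be a 2-graph with a single vertex, let a, b be positive integers, and let γ : Λ^{(a,0)} → Λ^{(0,b)} be a bijection such that μν = γ(μ)γ^{-1}(ν) for all μ ∈ Λ^{(a,0)} and ν ∈ Λ^{(0,b)}. Then αβ = γ^{-1}(α)γ(β) for all α ∈ Λ^{(0,b)} and β ∈ Λ^{(a,0)}. -/
/-- Let `Λ` be a 2-graph with a single vertex (a monoid with an additive
degree map `d : Λ → ℕ²` having the unique factorisation property), let `a, b` be positive
integers, and let `γ : Λ^{(a,0)} → Λ^{(0,b)}` be a bijection such that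
`μ * ν = γ μ * γ⁻¹ ν` for all `μ ∈ Λ^{(a,0)}` and `ν ∈ Λ^{(0,b)}`.  Then
`α * β = γ⁻¹ α * γ β` for all `α ∈ Λ^{(0,b)}` and `β ∈ Λ^{(a,0)}`. -/
theorem stmt16 {Λ : Type*} [Monoid Λ] (d : Λ → ℕ × ℕ)
    (hd : ∀ x y : Λ, d (x * y) = d x + d y)
    (hfac : ∀ (lam : Λ) (p q : ℕ × ℕ), d lam = p + q →
      ∃! mn : Λ × Λ, d mn.1 = p ∧ d mn.2 = q ∧ lam = mn.1 * mn.2)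
    (a b : ℕ) (ha : 0 < a) (hb : 0 < b)
    (γ : {μ : Λ // d μ = (a, 0)} ≃ {ν : Λ // d ν = (0, b)})
    (hγ : ∀ (μ : {μ : Λ // d μ = (a, 0)}) (ν : {ν : Λ // d ν = (0, b)}),
      (μ : Λ) * (ν : Λ) = (γ μ : Λ) * (γ.symm ν : Λ)) :
    ∀ (α : {ν : Λ // d ν = (0, b)}) (β : {μ : Λ // d μ = (a, 0)}),
      (α : Λ) * (β : Λ) = (γ.symm α : Λ) * (γ β : Λ) := by
  intro α β
  have hdab : d ((α : Λ) * β) = ((a:ℕ), 0) + (0, b) := by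
    rw [hd, α.2, β.2, Prod.mk_add_mk, Prod.mk_add_mk]
    simp
  obtain ⟨⟨μ, ν⟩, ⟨hμ, hν, heq⟩, -⟩ := hfac ((α : Λ) * β) (a, 0) (0, b) hdab
  have hγeq := hγ ⟨μ, hμ⟩ ⟨ν, hν⟩
  have hdab' : d ((α : Λ) * β) = ((0:ℕ), b) + (a, 0) := by
    rw [hd, α.2, β.2]
  obtain ⟨mn, -, huniq⟩ := hfac ((α : Λ) * β) (0, b) (a, 0) hdab'
  have h1 : ((α : Λ), (β : Λ)) = mn := huniq _ ⟨α.2, β.2, rfl⟩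
  have h2 : ((((γ ⟨μ, hμ⟩ : Λ)), ((γ.symm ⟨ν, hν⟩ : Λ))) : Λ × Λ) = mn :=
    huniq _ ⟨(γ ⟨μ, hμ⟩).2, (γ.symm ⟨ν, hν⟩).2, by rw [heq, hγeq]⟩
  have h3 : ((α : Λ), (β : Λ)) = (((γ ⟨μ, hμ⟩ : Λ)), ((γ.symm ⟨ν, hν⟩ : Λ))) :=
    h1.trans h2.symm
  have hα : α = γ ⟨μ, hμ⟩ := Subtype.ext (congrArg Prod.fst h3)
  have hβ : β = γ.symm ⟨ν, hν⟩ := Subtype.ext (congrArg Prod.snd h3)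
  rw [heq, hα, hβ]
  simp
end
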